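/- arXiv:2401.12859 — 2 statements merged into one kernel-verified Lean document; each statement's English description precedes it below -/
import Mathlib

section
/- For every integer c ≥ 0, the extended Λ-matrix identity R_m^{c+1} · Λ_m(-c) = Λ_m(1) holds, where R_m is the (m+1)×(m+1) upper triangular matrix of all 1's. In particular R_m · Λ_m(0) = Λ_m(1), and Λ_m(-(c+1)) = R_m^{-1} · Λ_m(-c). -/
open scoped BigOperators

/-- Generalized binomial coefficient `C(n,k)` for integer `n` and `k`, valued in `ℚ`:
`n(n-1)⋯(n-k+1)/k!` for `k ≥ 0`, and `0` for `k < 0`. -/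
def ichoose (n : ℤ) (k : ℤ) : ℚ :=
  if k < 0 then 0 else (∏ i ∈ Finset.range k.toNat, ((n : ℚ) - i)) / (k.toNat.factorial : ℚ)

/-- Generalized multichoose `⟪n, r⟫ = C(n + r - 1, r)`. -/
def imchoose (n : ℤ) (r : ℤ) : ℚ := ichoose (n + r - 1) r

/-- The `(m+1)×(m+1)` matrix `Λ_m(a)` whose (1-indexed) `(i,j)`-entry is `⟪a, m + 2 - i - j⟫`. -/
def Lam (m : ℕ) (a : ℤ) : Matrix (Fin (m+1)) (Fin (m+1)) ℚ :=
  fun i j => imchoose a ((m : ℤ) - (i : ℕ) - (j : ℕ))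

/-- The product `Λ_m(a₁) ⋯ Λ_m(aₙ)` for a continued fraction `[a₁, …, aₙ]`. -/
def CFmat (m : ℕ) (l : List ℤ) : Matrix (Fin (m+1)) (Fin (m+1)) ℚ :=
  (l.map (Lam m)).prod

/-- `r_{i,m}` of the continued fraction `l`: the `(m+1-i)`-th entry (1-indexed) of the first
column of the matrix product `Λ_m(a₁) ⋯ Λ_m(aₙ)`, divided by the bottom-left entry. -/
def rCF (m : ℕ) (l : List ℤ) (i : ℕ) : ℚ :=
  CFmat m l ⟨m - i, by omega⟩ ⟨0, by omega⟩ / CFmat m l ⟨m, by omega⟩ ⟨0, by omega⟩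

/-- The value of a continued fraction `[a₁, …, aₙ] = a₁ + 1/(a₂ + 1/(⋯))`. -/
def cfVal : List ℤ → ℚ
  | [] => 0
  | [a] => a
  | a :: l => a + 1 / cfVal l

/-- The `(m+1)×(m+1)` upper triangular matrix `R_m` of all `1`'s. -/
def Rmat (m : ℕ) : Matrix (Fin (m+1)) (Fin (m+1)) ℚ :=
  fun i j => if i ≤ j then 1 else 0

lemma ichoose_neg (n k : ℤ) (h : k < 0) : ichoose n k = 0 := by simp [ichoose, h]

lemma ichoose_zero (n : ℤ) : ichoose n 0 = 1 := by simp [ichoose]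

lemma ichoose_natCast (n : ℤ) (K : ℕ) :
    ichoose n K = (∏ i ∈ Finset.range K, ((n : ℚ) - i)) / (K.factorial : ℚ) := by
  simp [ichoose]

lemma pascal_nat (n : ℤ) (K : ℕ) :
    ichoose (n+1) ((K:ℤ)+1) = ichoose n K + ichoose n ((K:ℤ)+1) := by
  have h1 : ((K:ℤ)+1) = ((K+1 : ℕ) : ℤ) := by push_cast; ring
  rw [h1, ichoose_natCast, ichoose_natCast, ichoose_natCast]
  rw [Finset.prod_range_succ', Finset.prod_range_succ]
  have hp : ∀ i ∈ Finset.range K, (((n+1 : ℤ) : ℚ) - (↑(i+1) : ℚ)) = ((n:ℚ) - i) := by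
    intro i _; push_cast; ring
  rw [Finset.prod_congr rfl hp]
  have hK : (K.factorial : ℚ) ≠ 0 := Nat.cast_ne_zero.mpr K.factorial_ne_zero
  have hK1 : ((K+1).factorial : ℚ) ≠ 0 := Nat.cast_ne_zero.mpr (K+1).factorial_ne_zero
  rw [Nat.factorial_succ]
  push_cast
  field_simp
  ring

lemma imchoose_pascal (a t : ℤ) :
    imchoose (a+1) t = imchoose a t + imchoose (a+1) (t-1) := by
  rcases lt_trichotomy t 0 with h | h | h
  · simp [imchoose, ichoose_neg _ _ h, ichoose_neg _ _ (by omega : t - 1 < 0)]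
  · subst h
    simp [imchoose, ichoose_zero, ichoose_neg _ (-1 : ℤ) (by norm_num)]
  · obtain ⟨K, hK⟩ := Int.le.dest h
    have ht : t = (K:ℤ) + 1 := by omega
    subst ht
    simp only [imchoose]
    rw [show a + 1 + ((K:ℤ) + 1) - 1 = (a + K) + 1 by ring,
        show a + ((K:ℤ) + 1) - 1 = a + K by ring,
        show (K:ℤ) + 1 - 1 = (K:ℤ) by ring,
        show a + 1 + (K:ℤ) - 1 = a + K by ring]
    rw [pascal_nat (a + K) K]; ring

lemma imchoose_nonpos (a t : ℤ) (h : t ≤ 0) : imchoose (a+1) t = imchoose a t := by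
  rcases lt_or_eq_of_le h with h | h
  · simp [imchoose, ichoose_neg _ _ h]
  · subst h; simp [imchoose, ichoose_zero]

lemma sum_imchoose (a : ℤ) : ∀ (n : ℕ) (t : ℤ), t ≤ n →
    ∑ s ∈ Finset.range (n+1), imchoose a (t - s) = imchoose (a+1) t := by
  intro n
  induction n with
  | zero =>
    intro t ht
    simp only [zero_add, Finset.range_one, Finset.sum_singleton, Nat.cast_zero, sub_zero]
    exact (imchoose_nonpos a t (by exact_mod_cast ht)).symm
  | succ n ih =>
    intro t ht
    rw [Finset.sum_range_succ']
    have h1 : ∀ s ∈ Finset.range (n+1), imchoose a (t - ↑(s+1)) = imchoose a ((t-1) - s) := by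
      intro s _; congr 1; push_cast; ring
    rw [Finset.sum_congr rfl h1, ih (t-1) (by push_cast at ht ⊢; omega)]
    simp only [Nat.cast_zero, sub_zero]
    rw [imchoose_pascal a t]; ring

lemma R_mul_Lam (m : ℕ) (a : ℤ) : Rmat m * Lam m a = Lam m (a+1) := by
  ext i j
  simp only [Matrix.mul_apply, Rmat, Lam, ite_mul, one_mul, zero_mul]
  have step1 : ∀ k : Fin (m+1),
      (if i ≤ k then imchoose a ((m:ℤ) - (k:ℕ) - (j:ℕ)) else 0) =
      (fun K : ℕ => if (i:ℕ) ≤ K then imchoose a ((m:ℤ) - K - (j:ℕ)) else 0) (k:ℕ) := by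
    intro k; simp only [Fin.le_def]
  rw [Finset.sum_congr rfl (fun k _ => step1 k),
     Fin.sum_univ_eq_sum_range (fun K : ℕ => if (i:ℕ) ≤ K then imchoose a ((m:ℤ) - K - (j:ℕ)) else 0) (m+1)]
  rw [← Finset.sum_filter]
  have hfil : (Finset.range (m+1)).filter (fun K => (i:ℕ) ≤ K) = Finset.Ico (i:ℕ) (m+1) := by
    ext k; simp [Finset.mem_filter, Finset.mem_Ico, Finset.mem_range]; omega
  rw [hfil, Finset.sum_Ico_eq_sum_range]
  have hi : (i:ℕ) ≤ m := by omega
  have hm : m + 1 - (i:ℕ) = (m - (i:ℕ)) + 1 := by omega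
  rw [hm]
  have h2 : ∀ s ∈ Finset.range (m - (i:ℕ) + 1),
      imchoose a ((m:ℤ) - ((i:ℕ) + s : ℕ) - (j:ℕ)) =
      imchoose a (((m:ℤ) - (i:ℕ) - (j:ℕ)) - s) := by
    intro s _; congr 1; push_cast; ring
  rw [Finset.sum_congr rfl h2, sum_imchoose a (m - (i:ℕ)) _ (by push_cast [Nat.cast_sub hi]; omega)]
/-- For every integer `c ≥ 0`, the extended `Λ`-matrix identity
`R_m^{c+1} ⬝ Λ_m(-c) = Λ_m(1)` holds.  In particular `R_m ⬝ Λ_m(0) = Λ_m(1)`, and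
`Λ_m(-(c+1)) = R_m⁻¹ ⬝ Λ_m(-c)`. -/
theorem Rpow_mul_Lam_neg (m : ℕ) (c : ℕ) :
    Rmat m ^ (c + 1) * Lam m (-(c : ℤ)) = Lam m 1 ∧
    Rmat m * Lam m 0 = Lam m 1 ∧
    Lam m (-((c : ℤ) + 1)) = (Rmat m)⁻¹ * Lam m (-(c : ℤ)) := by
  have key : ∀ a, Rmat m * Lam m a = Lam m (a+1) := R_mul_Lam m
  have h2 : Rmat m * Lam m 0 = Lam m 1 := by simpa using key 0
  have hstep : Rmat m * Lam m (-((c:ℤ)+1)) = Lam m (-(c:ℤ)) := by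
    have := key (-((c:ℤ)+1)); rwa [show -((c:ℤ)+1)+1 = -(c:ℤ) by ring] at this
  have h1 : ∀ c : ℕ, Rmat m ^ (c+1) * Lam m (-(c:ℤ)) = Lam m 1 := by
    intro c
    induction c with
    | zero => simpa using h2
    | succ c ih =>
      have hs : Rmat m * Lam m (-((c:ℤ)+1)) = Lam m (-(c:ℤ)) := by
        have := key (-((c:ℤ)+1)); rwa [show -((c:ℤ)+1)+1 = -(c:ℤ) by ring] at this
      have he : Rmat m ^ (c+1+1) * Lam m (-((c+1:ℕ):ℤ)) =
          Rmat m ^ (c+1) * (Rmat m * Lam m (-((c:ℤ)+1))) := by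
        push_cast
        rw [pow_succ, mul_assoc]
      rw [he, hs, ih]
  refine ⟨h1 c, h2, ?_⟩
  have hbt : (Rmat m).BlockTriangular id := by
    intro i j hij; simp only [Rmat]; rw [if_neg]; exact not_le.mpr hij
  have hdet : (Rmat m).det = 1 := by
    rw [Matrix.det_of_upperTriangular hbt]; simp [Rmat]
  haveI : Invertible (Rmat m) := (Rmat m).invertibleOfIsUnitDet (by rw [hdet]; exact isUnit_one)
  rw [← hstep, Matrix.inv_mul_cancel_left_of_invertible]
end

section
/- For fixed rational x > 0 with x not an integer, writing c_1 = ⌊x⌋, and fixed i ≥ 0, the limit as m → ∞ of r_{i,m}(x) equals ⟪c_1 + 1, i⟫ = C(c_1 + i, i); that is, lim_{m→∞} r_{i,m}(x) = ⟪⌈x⌉, i⟫. In particular, for any positive integers c_1, a, lim_{m→∞} r_{i,m}(c_1 + 1/a) = ⟪c_1 + 1, i⟫. -/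
open scoped BigOperators
open Filter Finset

lemma prod_fact (N n : ℕ) (h : n ≤ N) :
    (∏ i ∈ Finset.range n, ((N:ℚ) - i)) * ((N - n).factorial : ℚ) = (N.factorial : ℚ) := by
  induction n with
  | zero => simp
  | succ n ih =>
    have h' : n ≤ N := by omega
    rw [Finset.prod_range_succ]
    have hc : ((N:ℚ) - n) = ((N - n : ℕ) : ℚ) := by
      push_cast [Nat.cast_sub h']; ring
    have hf : ((N - n).factorial : ℚ) = ((N - n : ℕ) : ℚ) * ((N - (n+1)).factorial : ℚ) := by
      have : N - n = (N - (n+1)) + 1 := by omega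
      rw [this, Nat.factorial_succ]
      push_cast
      try ring
    calc (∏ i ∈ Finset.range n, ((N:ℚ) - i)) * ((N:ℚ) - n) * ((N - (n+1)).factorial : ℚ)
        = (∏ i ∈ Finset.range n, ((N:ℚ) - i)) * (((N - n:ℕ):ℚ) * ((N - (n+1)).factorial : ℚ)) := by
          rw [hc]; ring
      _ = (∏ i ∈ Finset.range n, ((N:ℚ) - i)) * ((N - n).factorial : ℚ) := by rw [hf]
      _ = _ := ih h'

lemma imchoose_prod (b : ℕ) (hb : 1 ≤ b) (n : ℕ) :
    imchoose (b:ℤ) (n:ℤ) = (∏ t ∈ Finset.range (b-1), ((n:ℚ) + 1 + t)) / ((b-1).factorial : ℚ) := by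
  have h0 : ¬ ((n:ℤ) < 0) := by omega
  rw [imchoose, ichoose, if_neg h0]
  have htn : ((n:ℤ)).toNat = n := Int.toNat_natCast n
  rw [htn]
  have hcast : ((b:ℤ) + n - 1 : ℤ) = ((b - 1 + n : ℕ) : ℤ) := by omega
  rw [hcast]
  -- both sides times factorials equal (b-1+n)!
  have h1 : (∏ i ∈ Finset.range n, (((b-1+n:ℕ):ℚ) - i)) * ((b-1).factorial : ℚ)
      = ((b-1+n).factorial : ℚ) := by
    have := prod_fact (b-1+n) n (by omega)
    rwa [show b-1+n-n = b-1 by omega] at this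
  have h2 : (∏ t ∈ Finset.range (b-1), ((n:ℚ) + 1 + t)) * (n.factorial : ℚ)
      = ((b-1+n).factorial : ℚ) := by
    have hrefl : (∏ t ∈ Finset.range (b-1), ((n:ℚ) + 1 + t))
        = ∏ i ∈ Finset.range (b-1), (((b-1+n:ℕ):ℚ) - i) := by
      rw [← Finset.prod_range_reflect (fun i => (((b-1+n:ℕ):ℚ) - i)) (b-1)]
      apply Finset.prod_congr rfl
      intro j hj
      simp only [Finset.mem_range] at hj
      have hsub : (b-1-1-j) ≤ b-1+n := by omega
      have e : (b-1+n) - (b-1-1-j) = n+1+j := by omega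
      calc ((n:ℚ)+1+j) = ((n+1+j : ℕ) : ℚ) := by push_cast; ring
        _ = (((b-1+n) - (b-1-1-j) : ℕ) : ℚ) := by rw [e]
        _ = ((b-1+n:ℕ):ℚ) - ((b-1-1-j:ℕ):ℚ) := by rw [Nat.cast_sub hsub]
    rw [hrefl]
    have := prod_fact (b-1+n) (b-1) (by omega)
    rwa [show b-1+n-(b-1) = n by omega] at this
  have hfn : (n.factorial : ℚ) ≠ 0 := by positivity
  have hfb : (((b-1).factorial : ℕ) : ℚ) ≠ 0 := by positivity
  rw [div_eq_div_iff hfn hfb]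
  push_cast at h1 h2 ⊢
  rw [h1, h2]

lemma imchoose_neg (a : ℤ) {r : ℤ} (hr : r < 0) : imchoose a r = 0 := by
  rw [imchoose, ichoose, if_pos hr]

lemma imchoose_zero (a : ℤ) : imchoose a 0 = 1 := by
  simp [imchoose, ichoose]

lemma imchoose_nonneg {a : ℤ} (ha : 1 ≤ a) (r : ℤ) : 0 ≤ imchoose a r := by
  rcases lt_or_ge r 0 with h | h
  · rw [imchoose_neg a h]
  · obtain ⟨b, rfl⟩ := Int.eq_ofNat_of_zero_le (by omega : (0:ℤ) ≤ a)
    obtain ⟨n, rfl⟩ := Int.eq_ofNat_of_zero_le h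
    rw [imchoose_prod b (by exact_mod_cast ha) n]
    positivity

lemma imchoose_pos {a : ℤ} (ha : 1 ≤ a) {r : ℤ} (hr : 0 ≤ r) : 0 < imchoose a r := by
  obtain ⟨b, rfl⟩ := Int.eq_ofNat_of_zero_le (by omega : (0:ℤ) ≤ a)
  obtain ⟨n, rfl⟩ := Int.eq_ofNat_of_zero_le hr
  rw [imchoose_prod b (by exact_mod_cast ha) n]
  positivity

lemma imchoose_mono {a : ℤ} (ha : 1 ≤ a) {r s : ℤ} (hrs : r ≤ s) :
    imchoose a r ≤ imchoose a s := by
  rcases lt_or_ge r 0 with h | h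
  · rw [imchoose_neg a h]
    exact imchoose_nonneg ha s
  · obtain ⟨b, rfl⟩ := Int.eq_ofNat_of_zero_le (by omega : (0:ℤ) ≤ a)
    obtain ⟨n, rfl⟩ := Int.eq_ofNat_of_zero_le h
    obtain ⟨p, rfl⟩ := Int.eq_ofNat_of_zero_le (by omega : (0:ℤ) ≤ s)
    have hb : 1 ≤ b := by exact_mod_cast ha
    rw [imchoose_prod b hb n, imchoose_prod b hb p]
    have hle : (n:ℚ) ≤ (p:ℚ) := by exact_mod_cast hrs
    gcongr with t ht


lemma tendsto_shift_ratio (k t : ℕ) :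
    Tendsto (fun m : ℕ => ((m:ℚ) - k + 1 + t) / ((m:ℚ) + 1 + t)) atTop (nhds 1) := by
  have h2 : Tendsto (fun m : ℕ => ((m:ℚ) + 1 + t)) atTop atTop := by
    apply tendsto_atTop_add_const_right
    apply tendsto_atTop_add_const_right
    exact tendsto_natCast_atTop_atTop
  have h3 : Tendsto (fun m : ℕ => (k:ℚ) * ((m:ℚ) + 1 + t)⁻¹) atTop (nhds 0) := by
    simpa using (h2.inv_tendsto_atTop).const_mul (k:ℚ)
  have h4 : Tendsto (fun m : ℕ => 1 - (k:ℚ) * ((m:ℚ) + 1 + t)⁻¹) atTop (nhds 1) := by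
    simpa using (tendsto_const_nhds (x := (1:ℚ))).sub h3
  apply h4.congr
  intro m
  have hne : ((m:ℚ) + 1 + t) ≠ 0 := by positivity
  field_simp
  ring

lemma imchoose_ratio_tendsto {a : ℤ} (ha : 1 ≤ a) (k : ℕ) :
    Tendsto (fun m : ℕ => imchoose a ((m:ℤ) - k) / imchoose a (m:ℤ)) atTop (nhds 1) := by
  obtain ⟨b, rfl⟩ := Int.eq_ofNat_of_zero_le (by omega : (0:ℤ) ≤ a)
  have hb : 1 ≤ b := by exact_mod_cast ha
  have hclean : Tendsto (fun m : ℕ =>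
      ∏ t ∈ Finset.range (b-1), (((m:ℚ) - k + 1 + t) / ((m:ℚ) + 1 + t))) atTop (nhds 1) := by
    have := tendsto_finset_prod (f := fun (t : ℕ) (m : ℕ) => ((m:ℚ) - k + 1 + t) / ((m:ℚ) + 1 + t))
      (x := atTop) (a := fun _ => (1:ℚ)) (Finset.range (b-1))
      (fun t _ => tendsto_shift_ratio k t)
    simpa using this
  apply hclean.congr'
  filter_upwards [eventually_ge_atTop k] with m hm
  have hcast : ((m:ℤ) - k) = ((m - k : ℕ) : ℤ) := by omega
  rw [hcast, imchoose_prod b hb (m-k), imchoose_prod b hb m]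
  have hF : ((b-1).factorial : ℚ) ≠ 0 := by positivity
  rw [div_div_div_comm, div_self hF, div_one]
  rw [← Finset.prod_div_distrib]
  apply Finset.prod_congr rfl
  intro t _
  congr 1
  push_cast [Nat.cast_sub hm]
  ring

lemma imchoose_ratio_tendsto' {a : ℤ} (ha : 1 ≤ a) (k : ℕ) :
    Tendsto (fun m : ℕ => imchoose a (m:ℤ) / imchoose a ((m:ℤ) - k)) atTop (nhds 1) := by
  have h := (imchoose_ratio_tendsto ha k).inv₀ (one_ne_zero)
  simp only [inv_one] at h
  apply h.congr
  intro m
  rw [inv_div]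

lemma ichoose_pascal (n : ℤ) (k : ℕ) :
    ichoose n ((k:ℤ)+1) = ichoose (n-1) (k:ℤ) + ichoose (n-1) ((k:ℤ)+1) := by
  have h1 : ¬ ((k:ℤ) + 1 < 0) := by omega
  have h2 : ¬ ((k:ℤ) < 0) := by omega
  rw [ichoose, ichoose, ichoose, if_neg h1, if_neg h2, if_neg h1]
  have ht1 : ((k:ℤ)+1).toNat = k + 1 := by omega
  have ht2 : ((k:ℤ)).toNat = k := by omega
  rw [ht1, ht2]
  push_cast
  have e1 : (∏ i ∈ Finset.range (k+1), ((n:ℚ) - i))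
      = (n:ℚ) * ∏ i ∈ Finset.range k, ((n:ℚ) - 1 - i) := by
    rw [Finset.prod_range_succ' (fun i => ((n:ℚ) - i)) k]
    simp only [Nat.cast_zero, sub_zero]
    rw [mul_comm]
    congr 1
    apply Finset.prod_congr rfl
    intro i _
    push_cast
    ring
  have e2 : (∏ i ∈ Finset.range (k+1), ((n:ℚ) - 1 - i))
      = (∏ i ∈ Finset.range k, ((n:ℚ) - 1 - i)) * ((n:ℚ) - 1 - k) := Finset.prod_range_succ _ _
  rw [e1, e2]
  have hfk : (k.factorial : ℚ) ≠ 0 := by positivity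
  have hfk1 : ((k+1).factorial : ℚ) ≠ 0 := by positivity
  rw [Nat.factorial_succ] at hfk1 ⊢
  push_cast at hfk1 ⊢
  field_simp
  ring

lemma imchoose_hockey (c : ℤ) (i : ℕ) :
    ∑ j ∈ Finset.range (i+1), imchoose c (j:ℤ) = imchoose (c+1) (i:ℤ) := by
  induction i with
  | zero => simp [imchoose_zero]
  | succ i ih =>
    rw [Finset.sum_range_succ, ih]
    simp only [imchoose]
    push_cast
    have hp := ichoose_pascal (c+(i:ℤ)+1) i
    rw [show c+(i:ℤ)+1-1 = c + i from by ring] at hp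
    rw [show c + 1 + (i:ℤ) - 1 = c + i from by ring,
        show c + ((i:ℤ)+1) - 1 = c + i from by ring,
        show c + 1 + ((i:ℤ)+1) - 1 = c + (i:ℤ) + 1 from by ring, hp]

def colQ (m : ℕ) (l : List ℤ) (j : ℕ) : ℚ :=
  if h : j ≤ m then CFmat m l ⟨j, by omega⟩ ⟨0, by omega⟩ else 0

lemma CFmat_cons (m : ℕ) (a : ℤ) (l : List ℤ) :
    CFmat m (a :: l) = Lam m a * CFmat m l := by
  simp [CFmat, List.map_cons, List.prod_cons]

lemma colQ_nil (m j : ℕ) : colQ m [] j = if j = 0 then 1 else 0 := by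
  rw [colQ]
  split
  · rename_i h
    rw [CFmat]
    simp only [List.map_nil, List.prod_nil]
    rw [Matrix.one_apply]
    by_cases hj : j = 0
    · subst hj; simp
    · rw [if_neg hj, if_neg]
      intro hc
      apply hj
      simpa [Fin.ext_iff] using hc
  · rename_i h
    rw [if_neg (by omega)]

lemma colQ_cons (m : ℕ) (a : ℤ) (l : List ℤ) (j : ℕ) (hj : j ≤ m) :
    colQ m (a :: l) j = ∑ k ∈ Finset.range (m+1),
      imchoose a ((m:ℤ) - j - k) * colQ m l k := by
  rw [colQ, dif_pos hj, CFmat_cons, Matrix.mul_apply]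
  rw [show (∑ k : Fin (m+1), Lam m a ⟨j, by omega⟩ k * CFmat m l k ⟨0, by omega⟩)
      = ∑ k : Fin (m+1), (fun kn : ℕ => imchoose a ((m:ℤ) - j - kn) * colQ m l kn) (k : ℕ) from
    Finset.sum_congr rfl (fun k _ => by
      simp only [Lam, colQ]
      rw [dif_pos (by omega : (k:ℕ) ≤ m)])]
  exact Fin.sum_univ_eq_sum_range (fun kn => imchoose a ((m:ℤ) - j - kn) * colQ m l kn) (m+1)

lemma colQ_nonneg {l : List ℤ} (hl : ∀ a ∈ l, 1 ≤ a) (m j : ℕ) : 0 ≤ colQ m l j := by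
  induction l generalizing j with
  | nil =>
    rw [colQ_nil]; split <;> norm_num
  | cons a l ih =>
    by_cases hj : j ≤ m
    · rw [colQ_cons m a l j hj]
      apply Finset.sum_nonneg
      intro k _
      exact mul_nonneg (imchoose_nonneg (hl a (by simp)) _) (ih (fun b hb => hl b (by simp [hb])) k)
    · rw [colQ, dif_neg hj]

lemma colQ_zero_pos {l : List ℤ} (hl : ∀ a ∈ l, 1 ≤ a) (m : ℕ) : 0 < colQ m l 0 := by
  induction l with
  | nil => rw [colQ_nil]; norm_num
  | cons a l ih =>
    rw [colQ_cons m a l 0 (by omega)]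
    have ha : 1 ≤ a := hl a (by simp)
    have hl' : ∀ b ∈ l, 1 ≤ b := fun b hb => hl b (by simp [hb])
    have h0 : (0:ℚ) < imchoose a ((m:ℤ) - 0 - 0) * colQ m l 0 := by
      apply mul_pos (imchoose_pos ha (by omega)) (ih hl')
    calc (0:ℚ) < imchoose a ((m:ℤ) - 0 - 0) * colQ m l 0 := h0
      _ ≤ _ := Finset.single_le_sum (f := fun (k:ℕ) => imchoose a ((m:ℤ) - 0 - (k:ℤ)) * colQ m l k)
          (fun k _ => mul_nonneg (imchoose_nonneg ha _) (colQ_nonneg hl' m k))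
          (by simp : 0 ∈ Finset.range (m+1))

lemma colQ_pos {l : List ℤ} (hne : l ≠ []) (hl : ∀ a ∈ l, 1 ≤ a) (m : ℕ) {j : ℕ} (hj : j ≤ m) :
    0 < colQ m l j := by
  obtain ⟨a, l, rfl⟩ : ∃ a l', l = a :: l' := by
    cases l with | nil => exact absurd rfl hne | cons a l => exact ⟨a, l, rfl⟩
  rw [colQ_cons m a l j hj]
  have ha : 1 ≤ a := hl a (by simp)
  have hl' : ∀ b ∈ l, 1 ≤ b := fun b hb => hl b (by simp [hb])
  calc (0:ℚ) < imchoose a ((m:ℤ) - j - 0) * colQ m l 0 :=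
      mul_pos (imchoose_pos ha (by omega)) (colQ_zero_pos hl' m)
    _ ≤ _ := Finset.single_le_sum (f := fun (k:ℕ) => imchoose a ((m:ℤ) - (j:ℤ) - (k:ℤ)) * colQ m l k)
        (fun k _ => mul_nonneg (imchoose_nonneg ha _) (colQ_nonneg hl' m k))
        (by simp : 0 ∈ Finset.range (m+1))

lemma colQ_anti {l : List ℤ} (hl : ∀ a ∈ l, 1 ≤ a) (m : ℕ) {j j' : ℕ} (hjj : j ≤ j') :
    colQ m l j' ≤ colQ m l j := by
  by_cases hj' : j' ≤ m
  · have hj : j ≤ m := by omega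
    cases l with
    | nil =>
      rw [colQ_nil, colQ_nil]
      by_cases h0 : j = 0
      · subst h0; split <;> norm_num
      · rw [if_neg h0, if_neg (by omega)]
    | cons a l =>
      rw [colQ_cons m a l j hj, colQ_cons m a l j' hj']
      apply Finset.sum_le_sum
      intro k _
      have ha : 1 ≤ a := hl a (by simp)
      have hl' : ∀ b ∈ l, 1 ≤ b := fun b hb => hl b (by simp [hb])
      exact mul_le_mul_of_nonneg_right (imchoose_mono ha (by omega)) (colQ_nonneg hl' m k)
  · rw [colQ, dif_neg hj']
    exact colQ_nonneg hl m j

lemma colQ_single (m : ℕ) (a : ℤ) {j : ℕ} (hj : j ≤ m) :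
    colQ m [a] j = imchoose a ((m:ℤ) - j) := by
  rw [colQ_cons m a [] j hj, Finset.sum_eq_single_of_mem 0 (by simp)]
  · rw [colQ_nil]; simp
  · intro k _ hk
    rw [colQ_nil, if_neg hk, mul_zero]

lemma colQ_cons0 (m : ℕ) (a : ℤ) (l : List ℤ) :
    colQ m (a :: l) 0 = ∑ j ∈ Finset.range (m+1), imchoose a ((m:ℤ) - j) * colQ m l j := by
  rw [colQ_cons m a l 0 (by omega)]
  apply Finset.sum_congr rfl
  intro j _
  norm_num

lemma colQ_ratio {l : List ℤ} (hne : l ≠ []) (hl : ∀ a ∈ l, 1 ≤ a) :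
    ∀ k : ℕ, Tendsto (fun m : ℕ => colQ m l k / colQ m l 0) atTop (nhds 1) := by
  induction l with
  | nil => exact absurd rfl hne
  | cons a l ih =>
    have ha : 1 ≤ a := hl a (by simp)
    have hl' : ∀ b ∈ l, 1 ≤ b := fun b hb => hl b (by simp [hb])
    intro k
    cases l with
    | nil =>
      apply Filter.Tendsto.congr' _ (imchoose_ratio_tendsto ha k)
      filter_upwards [eventually_ge_atTop k] with m hm
      rw [colQ_single m a (by omega : k ≤ m), colQ_single m a (by omega : 0 ≤ m)]
      norm_num
    | cons b l2 =>
      set L : List ℤ := b :: l2 with hL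
      have hneL : L ≠ [] := by simp [hL]
      have ihL := ih hneL hl'
      have hW0pos : ∀ m : ℕ, 0 < colQ m L 0 := colQ_zero_pos hl'
      have hV0pos : ∀ m : ℕ, 0 < colQ m (a :: L) 0 := colQ_zero_pos hl
      have hWnn : ∀ m j : ℕ, 0 ≤ colQ m L j := colQ_nonneg hl'
      set t : ℕ → ℚ :=
        fun m => imchoose a (m:ℤ) * colQ m L 0 / colQ m (a :: L) 0 with htdef
      have ht_nonneg : ∀ m, 0 ≤ t m := fun m =>
        div_nonneg (mul_nonneg (imchoose_nonneg ha _) (hWnn m 0)) (hV0pos m).le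
      -- key lower bound
      have hlow : ∀ m : ℕ, k ≤ m →
          colQ m (a :: L) 0 - k * (imchoose a (m:ℤ) * colQ m L 0) ≤ colQ m (a :: L) k := by
        intro m hm
        set g : ℕ → ℚ := fun j => imchoose a ((m:ℤ) - j) * colQ m L j with hg
        have hg0 : ∀ j : ℕ, m < j → g j = 0 := by
          intro j hj
          simp only [hg]
          rw [imchoose_neg a (by omega : (m:ℤ) - j < 0), zero_mul]
        have hV0 : colQ m (a :: L) 0 = ∑ j ∈ Finset.range (m+1), g j := colQ_cons0 m a L
        have hVk : colQ m (a :: L) k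
            = ∑ j ∈ Finset.range (m+1), imchoose a ((m:ℤ) - k - j) * colQ m L j :=
          colQ_cons m a L k hm
        have stepA : ∑ j ∈ Finset.range (m+1), imchoose a ((m:ℤ) - k - j) * colQ m L (j + k)
            ≤ ∑ j ∈ Finset.range (m+1), imchoose a ((m:ℤ) - k - j) * colQ m L j := by
          apply Finset.sum_le_sum
          intro j _
          exact mul_le_mul_of_nonneg_left (colQ_anti hl' m (Nat.le_add_right j k))
            (imchoose_nonneg ha _)
        have stepB : ∑ j ∈ Finset.range (m+1), imchoose a ((m:ℤ) - k - j) * colQ m L (j + k)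
            = ∑ j ∈ Finset.range (m+1), g (k + j) := by
          apply Finset.sum_congr rfl
          intro j _
          simp only [hg]
          rw [Nat.add_comm j k]
          congr 2
          push_cast
          ring
        have stepC : ∑ j ∈ Finset.range (k + (m+1)), g j
            = ∑ j ∈ Finset.range k, g j + ∑ j ∈ Finset.range (m+1), g (k + j) :=
          Finset.sum_range_add g k (m+1)
        have stepD : ∑ j ∈ Finset.range (k + (m+1)), g j = ∑ j ∈ Finset.range (m+1), g j := by
          rw [show k + (m+1) = (m+1) + k from by omega, Finset.sum_range_add g (m+1) k]
          have : ∑ j ∈ Finset.range k, g (m + 1 + j) = 0 := by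
            apply Finset.sum_eq_zero
            intro j _
            exact hg0 _ (by omega)
          rw [this, add_zero]
        have stepE : ∑ j ∈ Finset.range k, g j ≤ k * (imchoose a (m:ℤ) * colQ m L 0) := by
          have : ∀ j ∈ Finset.range k, g j ≤ imchoose a (m:ℤ) * colQ m L 0 := by
            intro j _
            simp only [hg]
            apply mul_le_mul (imchoose_mono ha (by omega : (m:ℤ) - j ≤ (m:ℤ)))
              (colQ_anti hl' m (Nat.zero_le j)) (hWnn m j) (imchoose_nonneg ha _)
          calc ∑ j ∈ Finset.range k, g j ≤ ∑ _j ∈ Finset.range k, imchoose a (m:ℤ) * colQ m L 0 :=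
                Finset.sum_le_sum this
            _ = k * (imchoose a (m:ℤ) * colQ m L 0) := by
                rw [Finset.sum_const, Finset.card_range, nsmul_eq_mul]
        have := stepA
        rw [stepB] at this
        rw [hVk, hV0]
        linarith [stepC, stepD, stepE, this]
      have hup : ∀ m : ℕ, colQ m (a :: L) k ≤ colQ m (a :: L) 0 :=
        fun m => colQ_anti hl m (Nat.zero_le k)
      -- t tends to 0
      have ht0 : Tendsto t atTop (nhds 0) := by
        rw [tendsto_order]
        constructor
        · intro ε hε
          exact Eventually.of_forall fun m => lt_of_lt_of_le hε (ht_nonneg m)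
        · intro ε hε
          obtain ⟨J, hJ⟩ := exists_nat_gt (1/ε)
          set B : ℕ → ℚ := fun m =>
            (imchoose a (m:ℤ) / imchoose a ((m:ℤ) - J)) /
              (∑ j ∈ Finset.range (J+1), colQ m L j / colQ m L 0) with hB
          have hBlim : Tendsto B atTop (nhds (1 / ((J:ℚ) + 1))) := by
            have hnum := imchoose_ratio_tendsto' ha J
            have hden : Tendsto (fun m : ℕ => ∑ j ∈ Finset.range (J+1), colQ m L j / colQ m L 0)
                atTop (nhds ((J:ℚ) + 1)) := by
              have := tendsto_finset_sum (f := fun (j : ℕ) (m : ℕ) => colQ m L j / colQ m L 0)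
                (x := atTop) (a := fun _ => (1:ℚ)) (Finset.range (J+1)) (fun j _ => ihL j)
              simpa using this
            exact hnum.div hden (by positivity)
          have hεJ : 1 / ((J:ℚ) + 1) < ε := by
            rw [div_lt_iff₀ (by positivity)]
            rw [div_lt_iff₀ hε] at hJ
            nlinarith
          have hev1 : ∀ᶠ m in atTop, B m < ε := hBlim.eventually_lt_const hεJ
          have hev2 : ∀ᶠ m in atTop, t m ≤ B m := by
            filter_upwards [eventually_ge_atTop J] with m hm
            set S : ℚ := ∑ j ∈ Finset.range (J+1), colQ m L j with hS
            have hSpos : 0 < S := by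
              calc (0:ℚ) < colQ m L 0 := hW0pos m
                _ ≤ S := Finset.single_le_sum (f := fun j => colQ m L j)
                    (fun j _ => hWnn m j) (by simp : 0 ∈ Finset.range (J+1))
            have hmJpos : 0 < imchoose a ((m:ℤ) - J) := imchoose_pos ha (by omega)
            have hV0S : imchoose a ((m:ℤ) - J) * S ≤ colQ m (a :: L) 0 := by
              rw [colQ_cons0 m a L]
              calc imchoose a ((m:ℤ) - J) * S
                  = ∑ j ∈ Finset.range (J+1), imchoose a ((m:ℤ) - J) * colQ m L j := by
                    rw [hS, Finset.mul_sum]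
                _ ≤ ∑ j ∈ Finset.range (J+1), imchoose a ((m:ℤ) - j) * colQ m L j := by
                    apply Finset.sum_le_sum
                    intro j hj
                    simp only [Finset.mem_range] at hj
                    exact mul_le_mul_of_nonneg_right
                      (imchoose_mono ha (by omega : (m:ℤ) - J ≤ (m:ℤ) - j)) (hWnn m j)
                _ ≤ ∑ j ∈ Finset.range (m+1), imchoose a ((m:ℤ) - j) * colQ m L j := by
                    apply Finset.sum_le_sum_of_subset_of_nonneg
                      (Finset.range_subset_range.2 (by omega))
                    intro j _ _
                    exact mul_nonneg (imchoose_nonneg ha _) (hWnn m j)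
            have hXpos : 0 < imchoose a (m:ℤ) * colQ m L 0 :=
              mul_pos (imchoose_pos ha (by omega)) (hW0pos m)
            have h1 : t m ≤ imchoose a (m:ℤ) * colQ m L 0 / (imchoose a ((m:ℤ) - J) * S) :=
              div_le_div_of_nonneg_left hXpos.le (mul_pos hmJpos hSpos) hV0S
            have h2 : imchoose a (m:ℤ) * colQ m L 0 / (imchoose a ((m:ℤ) - J) * S) = B m := by
              have hW0 := (hW0pos m).ne'
              have hDne := hmJpos.ne'
              have hSne := hSpos.ne'
              simp only [hB]
              rw [← Finset.sum_div, ← hS]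
              field_simp
            exact le_of_le_of_eq h1 h2
          filter_upwards [hev1, hev2] with m h1 h2
          linarith
      -- squeeze
      have hg1 : Tendsto (fun m => 1 - (k:ℚ) * t m) atTop (nhds 1) := by
        have := (tendsto_const_nhds (x := (1:ℚ)) (f := atTop (α := ℕ))).sub (ht0.const_mul (k:ℚ))
        simpa using this
      apply tendsto_of_tendsto_of_tendsto_of_le_of_le' hg1 tendsto_const_nhds
      · filter_upwards [eventually_ge_atTop k] with m hm
        have hkey := hlow m hm
        have h3 := mul_le_mul_of_nonneg_right hkey (inv_nonneg.2 (hV0pos m).le)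
        have h4 : 1 - (k:ℚ) * t m
            = (colQ m (a :: L) 0 - k * (imchoose a (m:ℤ) * colQ m L 0)) * (colQ m (a :: L) 0)⁻¹ := by
          simp only [htdef]
          rw [sub_mul, mul_inv_cancel₀ (hV0pos m).ne', div_eq_mul_inv]
          ring
        rw [h4, div_eq_mul_inv]
        exact h3
      · filter_upwards with m
        exact div_le_one_of_le₀ (hup m) (hV0pos m).le

lemma rCF_eq_colQ (m : ℕ) (l : List ℤ) (i : ℕ) :
    rCF m l i = colQ m l (m - i) / colQ m l m := by
  rw [rCF, colQ, colQ, dif_pos (by omega : m - i ≤ m), dif_pos (le_refl m)]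

lemma rCF_formula (m : ℕ) (c : ℤ) (l : List ℤ) (i : ℕ) (hi : i ≤ m) :
    rCF m (c :: l) i = ∑ k ∈ Finset.range (i+1),
      imchoose c ((i:ℤ) - k) * (colQ m l k / colQ m l 0) := by
  rw [rCF_eq_colQ]
  have hnum : colQ m (c :: l) (m - i)
      = ∑ k ∈ Finset.range (i+1), imchoose c ((i:ℤ) - k) * colQ m l k := by
    rw [colQ_cons m c l (m - i) (by omega)]
    have hcast : ((m - i : ℕ) : ℤ) = (m:ℤ) - i := by omega
    rw [show (∑ k ∈ Finset.range (m+1), imchoose c ((m:ℤ) - ((m - i : ℕ):ℤ) - k) * colQ m l k)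
        = ∑ k ∈ Finset.range (m+1), imchoose c ((i:ℤ) - k) * colQ m l k from
      Finset.sum_congr rfl fun k _ => by rw [hcast]; ring_nf]
    rw [← Finset.sum_subset (Finset.range_subset_range.2 (by omega : i+1 ≤ m+1))]
    intro k _ hk
    simp only [Finset.mem_range] at hk
    rw [imchoose_neg c (by omega : (i:ℤ) - k < 0), zero_mul]
  have hden : colQ m (c :: l) m = colQ m l 0 := by
    rw [colQ_cons m c l m (le_refl m), Finset.sum_eq_single_of_mem 0 (by simp)]
    · norm_num [imchoose_zero]
    · intro k _ hk
      rw [imchoose_neg c (by omega : (m:ℤ) - m - k < 0), zero_mul]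
  rw [hnum, hden, Finset.sum_div]
  apply Finset.sum_congr rfl
  intro k _
  rw [mul_div_assoc]

lemma rCF_main (c : ℤ) (l : List ℤ) (hne : l ≠ []) (hl : ∀ a ∈ l, 1 ≤ a) (i : ℕ) :
    Tendsto (fun m : ℕ => rCF m (c :: l) i) atTop (nhds (imchoose (c+1) (i:ℤ))) := by
  have hlim : Tendsto (fun m : ℕ => ∑ k ∈ Finset.range (i+1),
      imchoose c ((i:ℤ) - k) * (colQ m l k / colQ m l 0)) atTop
      (nhds (∑ k ∈ Finset.range (i+1), imchoose c ((i:ℤ) - k) * 1)) := by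
    apply tendsto_finset_sum
    intro k _
    exact (colQ_ratio hne hl k).const_mul _
  have hsum : (∑ k ∈ Finset.range (i+1), imchoose c ((i:ℤ) - k) * 1) = imchoose (c+1) (i:ℤ) := by
    simp only [mul_one]
    rw [← imchoose_hockey c i, ← Finset.sum_range_reflect (fun j => imchoose c (j:ℤ)) (i+1)]
    apply Finset.sum_congr rfl
    intro k hk
    simp only [Finset.mem_range] at hk
    congr 1
    omega
  rw [hsum] at hlim
  apply hlim.congr'
  filter_upwards [eventually_ge_atTop i] with m hm
  exact (rCF_formula m c l i hm).symm

/-- For fixed rational `x > 0` which is not an integer, writing `c₁ = ⌊x⌋` (so that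
`⌈x⌉ = c₁ + 1`), and fixed `i ≥ 0`, the limit as `m → ∞` of `r_{i,m}(x)` equals
`⟪c₁ + 1, i⟫ = C(c₁ + i, i)`; that is, `lim_{m→∞} r_{i,m}(x) = ⟪⌈x⌉, i⟫`.  In particular,
for any positive integers `c₁, a`, `lim_{m→∞} r_{i,m}(c₁ + 1/a) = ⟪c₁ + 1, i⟫`. -/
theorem rCF_limit_in_m (x : ℚ) (hx : 0 < x) (hxnotint : x.den ≠ 1)
    (c₁ : ℤ) (hc₁ : c₁ = ⌊x⌋) (rest : List ℤ) (hrest : rest ≠ [])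
    (hpos : ∀ a ∈ rest, 1 ≤ a) (hval : cfVal (c₁ :: rest) = x) (i : ℕ) :
    Filter.Tendsto (fun m : ℕ => rCF m (c₁ :: rest) i) Filter.atTop
      (nhds (imchoose (c₁ + 1) (i : ℤ))) ∧
    ∀ d a : ℕ, 0 < d → 0 < a →
      Filter.Tendsto (fun m : ℕ => rCF m [(d : ℤ), (a : ℤ)] i) Filter.atTop
        (nhds (imchoose ((d : ℤ) + 1) (i : ℤ))) := by
  constructor
  · exact rCF_main c₁ rest hrest hpos i
  · intro d a hd ha
    apply rCF_main (d:ℤ) [(a:ℤ)] (by simp)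
    intro b hb
    simp only [List.mem_singleton] at hb
    subst hb
    exact_mod_cast ha
end
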